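/- Let k > 0, α > 0 be real, Λ ∈ ℂ, n a positive natural number. Define for ε > 0 the approximating transmission amplitude T_ε(k) = 2ik·D(ε)/N(ε) with D(ε) = −(sin kε/k)·(Λ/n) + cos kε + ((1−α)/(αεk))·sin kε and N(ε) = cos kε·Λ + n(k sin kε − ((1−α)/(αε))·cos kε) + (2ik − n(α−1)/ε)·D(ε). Then lim_{ε→0⁺} T_ε(k) = 2ik/(2ik + α²Λ), provided 2ik + α²Λ ≠ 0. -/

import Mathlib

/-!
Write `s = sin kε`, `c = cos kε`. The `1/ε` term of `D(ε)` is `((1 - α)/α) · s/(kε)`, so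
`D(ε) → 1 + (1 - α)/α = 1/α`. In `N(ε)` the singular terms coming from `(1 - α)/(αε)` and
`n(α - 1)/ε · D(ε)` combine into `(α - 1)Λ · s/(kε)` plus
`n(1 - α)²k/α · (sin x - x cos x)/x²` at `x = kε`; the latter vanishes in the limit because
`sin x - x cos x = x³/3 + O(x⁴)`. Hence `N(ε) → Λ + 2ik/α + (α - 1)Λ = (2ik + α²Λ)/α`.
-/

open Filter Topology

theorem abs_sin_sub_mul_cos_le {x : ℝ} (hx : |x| ≤ 1) :
    |Real.sin x - x * Real.cos x| ≤ |x| ^ 3 := by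
  have hsplit : Real.sin x - x * Real.cos x =
      (Real.sin x - (x - x ^ 3 / 6)) - x * (Real.cos x - (1 - x ^ 2 / 2)) + x ^ 3 / 3 := by
    ring
  have h0 := abs_nonneg x
  calc |Real.sin x - x * Real.cos x|
      ≤ |x| ^ 5 / 100 + |x| * (|x| ^ 4 * (5 / 96)) + |x| ^ 3 / 3 := by
        rw [hsplit]
        refine (abs_add_le _ _).trans
          (add_le_add ((abs_sub _ _).trans (add_le_add (Real.sin_bound hx) ?_)) ?_)
        · rw [abs_mul]
          exact mul_le_mul_of_nonneg_left (Real.cos_bound hx) h0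
        · rw [abs_div, abs_pow]
          norm_num
    _ ≤ |x| ^ 3 := by
        have : |x| ^ 2 ≤ 1 := pow_le_one₀ h0 hx
        nlinarith [pow_nonneg h0 3]

theorem tendsto_sin_sub_mul_cos_div_sq :
    Tendsto (fun x : ℝ => (Real.sin x - x * Real.cos x) / x ^ 2) (𝓝 0) (𝓝 0) := by
  refine squeeze_zero_norm' ?_ (continuous_abs.tendsto' 0 0 abs_zero)
  filter_upwards [Metric.closedBall_mem_nhds (0 : ℝ) one_pos] with x hx
  rw [mem_closedBall_zero_iff, Real.norm_eq_abs] at hx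
  rw [Real.norm_eq_abs, abs_div, abs_pow, sq_abs]
  rcases eq_or_ne x 0 with rfl | hx0
  · simp
  · rw [div_le_iff₀ (by positivity), ← sq_abs]
    calc _ ≤ |x| ^ 3 := abs_sin_sub_mul_cos_le hx
      _ = |x| * |x| ^ 2 := by ring

section

variable (k α : ℝ) (n : ℕ) (Λ : ℂ)

noncomputable def transmissionD (ε : ℝ) : ℂ :=
  -((Real.sin (k * ε) / k : ℝ) : ℂ) * (Λ / n) + ((Real.cos (k * ε) : ℝ) : ℂ) +
    (((1 - α) / (α * ε * k) * Real.sin (k * ε) : ℝ) : ℂ)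

noncomputable def transmissionN (ε : ℝ) : ℂ :=
  ((Real.cos (k * ε) : ℝ) : ℂ) * Λ +
    (n : ℂ) * (((k * Real.sin (k * ε) : ℝ) : ℂ) -
      (((1 - α) / (α * ε) : ℝ) : ℂ) * ((Real.cos (k * ε) : ℝ) : ℂ)) +
    (2 * Complex.I * k - (n : ℂ) * (((α - 1) / ε : ℝ) : ℂ)) * transmissionD k α n Λ ε

variable {k α n} {ε : ℝ}

theorem transmissionD_eq_of_ne_zero (hk : k ≠ 0) (hε : ε ≠ 0) :
    transmissionD k α n Λ ε = -((Real.sin (k * ε) / k : ℝ) : ℂ) * (Λ / n) +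
      ((Real.cos (k * ε) : ℝ) : ℂ) + (((1 - α) / α * Real.sinc (k * ε) : ℝ) : ℂ) := by
  rw [transmissionD, Real.sinc_of_ne_zero (mul_ne_zero hk hε)]
  congr 2
  field_simp

theorem transmissionN_eq_of_ne_zero (hk : k ≠ 0) (hα : α ≠ 0) (hn : n ≠ 0) (hε : ε ≠ 0) :
    transmissionN k α n Λ ε = ((Real.cos (k * ε) : ℝ) : ℂ) * Λ +
      n * ((k * Real.sin (k * ε) : ℝ) : ℂ) + (α - 1) * Λ * ((Real.sinc (k * ε) : ℝ) : ℂ) +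
      2 * Complex.I * k * transmissionD k α n Λ ε +
      n * (((1 - α) ^ 2 * k / α *
        ((Real.sin (k * ε) - k * ε * Real.cos (k * ε)) / (k * ε) ^ 2) : ℝ) : ℂ) := by
  rw [transmissionN, transmissionD, Real.sinc_of_ne_zero (mul_ne_zero hk hε)]
  have : (k : ℂ) ≠ 0 := by exact_mod_cast hk
  have : (α : ℂ) ≠ 0 := by exact_mod_cast hα
  have : (n : ℂ) ≠ 0 := by exact_mod_cast hn
  have : (ε : ℂ) ≠ 0 := by exact_mod_cast hε
  push_cast
  field_simp
  ring

theorem tendsto_transmissionD (hk : k ≠ 0) (hα : α ≠ 0) :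
    Tendsto (transmissionD k α n Λ) (𝓝[≠] 0) (𝓝 (α : ℂ)⁻¹) := by
  have hcont : Continuous fun ε : ℝ => -((Real.sin (k * ε) / k : ℝ) : ℂ) * (Λ / n) +
      ((Real.cos (k * ε) : ℝ) : ℂ) + (((1 - α) / α * Real.sinc (k * ε) : ℝ) : ℂ) := by
    fun_prop
  have hαC : (α : ℂ) ≠ 0 := by exact_mod_cast hα
  convert (hcont.tendsto 0).mono_left nhdsWithin_le_nhds |>.congr'
    (eventually_nhdsWithin_of_forall (s := {0}ᶜ) fun ε hε =>
      (transmissionD_eq_of_ne_zero Λ hk hε).symm) using 2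
  simp only [mul_zero, Real.sin_zero, Real.cos_zero, Real.sinc_zero]
  push_cast
  field_simp
  ring

theorem tendsto_transmissionN (hk : k ≠ 0) (hα : α ≠ 0) (hn : n ≠ 0) :
    Tendsto (transmissionN k α n Λ) (𝓝[≠] 0)
      (𝓝 ((2 * Complex.I * k + (α : ℂ) ^ 2 * Λ) / α)) := by
  have hcont : Continuous fun ε : ℝ => ((Real.cos (k * ε) : ℝ) : ℂ) * Λ +
      n * ((k * Real.sin (k * ε) : ℝ) : ℂ) + (α - 1) * Λ * ((Real.sinc (k * ε) : ℝ) : ℂ) := by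
    fun_prop
  have hW : Tendsto (fun ε : ℝ => (1 - α) ^ 2 * k / α *
      ((Real.sin (k * ε) - k * ε * Real.cos (k * ε)) / (k * ε) ^ 2)) (𝓝 0) (𝓝 0) := by
    simpa using (tendsto_sin_sub_mul_cos_div_sq.comp
      ((continuous_const_mul k).tendsto' 0 0 (mul_zero k))).const_mul ((1 - α) ^ 2 * k / α)
  have hαC : (α : ℂ) ≠ 0 := by exact_mod_cast hα
  convert (((hcont.tendsto 0).mono_left nhdsWithin_le_nhds).add
      ((tendsto_transmissionD Λ hk hα).const_mul (2 * Complex.I * k))).add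
      ((hW.ofReal.mono_left nhdsWithin_le_nhds).const_mul (n : ℂ)) |>.congr'
    (eventually_nhdsWithin_of_forall (s := {0}ᶜ) fun ε hε =>
      (transmissionN_eq_of_ne_zero Λ hk hα hn hε).symm) using 2
  simp only [mul_zero, Real.sin_zero, Real.cos_zero, Real.sinc_zero]
  push_cast
  field_simp
  ring

end

theorem stmt_16 (k α : ℝ) (hk : 0 < k) (hα : 0 < α) (n : ℕ) (hn : 1 ≤ n) (Λ : ℂ)
    (hden : 2 * Complex.I * k + (α : ℂ)^2 * Λ ≠ 0) :
    Tendsto (fun ε : ℝ =>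
        (2 * Complex.I * k *
          (-((Real.sin (k * ε) / k : ℝ) : ℂ) * (Λ / n) +
            ((Real.cos (k * ε) : ℝ) : ℂ) +
            (((1 - α) / (α * ε * k) * Real.sin (k * ε) : ℝ) : ℂ))) /
        (((Real.cos (k * ε) : ℝ) : ℂ) * Λ +
          (n : ℂ) * (((k * Real.sin (k * ε) : ℝ) : ℂ) -
            (((1 - α) / (α * ε) : ℝ) : ℂ) * ((Real.cos (k * ε) : ℝ) : ℂ)) +
          (2 * Complex.I * k - (n : ℂ) * (((α - 1) / ε : ℝ) : ℂ)) *
            (-((Real.sin (k * ε) / k : ℝ) : ℂ) * (Λ / n) +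
              ((Real.cos (k * ε) : ℝ) : ℂ) +
              (((1 - α) / (α * ε * k) * Real.sin (k * ε) : ℝ) : ℂ))))
      (nhdsWithin 0 (Set.Ioi 0))
      (nhds (2 * Complex.I * k / (2 * Complex.I * k + (α : ℂ)^2 * Λ))) := by
  have hαC : (α : ℂ) ≠ 0 := by exact_mod_cast hα.ne'
  have hT := ((tendsto_transmissionD (n := n) Λ hk.ne' hα.ne').const_mul (2 * Complex.I * k)).div
    (tendsto_transmissionN Λ hk.ne' hα.ne' (Nat.pos_iff_ne_zero.mp hn)) (div_ne_zero hden hαC)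
  rw [show 2 * Complex.I * k / (2 * Complex.I * k + (α : ℂ) ^ 2 * Λ) =
    2 * Complex.I * k * (α : ℂ)⁻¹ / ((2 * Complex.I * k + (α : ℂ) ^ 2 * Λ) / α) by
      field_simp]
  exact hT.mono_left (nhdsGT_le_nhdsNE 0)
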